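/- arXiv:2601.13756 — 2 statements merged into one kernel-verified Lean document; each statement's English description precedes it below -/
import Mathlib

section
/- Let n ∈ ℕ with n ≥ 1, let λ̄ be a minimizer of σ(B(·)) over Λ_n with σ̄ = σ(B(λ̄)), let v̄ be a Perron vector of B(λ̄), set v̄_0 := 0, ā_i := (v̄_i/v̄_1)^{2/3} for i = 0,…,n+2, and define r̄ := σ̄^{2/3} λ̄_0^{1/3} and q̄ := 2/r̄. Then ā_0 < ā_1 < ā_2 < … < ā_{⌊(n+3)/2⌋} < q̄; moreover r̄ < √2 and q̄ > √2. -/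
/-!
At a minimizer the Perron vector balances the weights: `λ_k^(-3/2) v_k v_(k+1)` does not depend
on `k`. Otherwise moving mass from one `λ_k` to another lowers the Perron root to first order; a
correspondingly perturbed Perron vector certifies this through the Collatz–Wielandt bound.
Multiplying the eigenvalue equation by `v_j` and inserting the balance turns it into the
recurrence `a_(j-1) + a_(j+1) = r a_j ^ 2` for `a_j = (v_j / v_1)^(2/3)`, with `a_0 = a_(n+3) = 0`
and `a_1 = 1`. A positive solution of this boundary-value problem stays below `2 / r` (a maximum
at or above `2 / r` propagates down to `a_0 = 0`), hence is strictly concave, and it is symmetric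
by a Wronskian comparison with its reflection. So it increases up to the middle, and
`a_2 = r < 2 / r` gives `r < √2 < q`.
-/

open Real

/-- The `(n+2) × (n+2)` symmetric tridiagonal matrix `B(λ)` with zero diagonal and
entries `λ_{j}^{-1/2}` on the sub/super-diagonals (0-based indexing: the entry in
positions `(i, i+1)` and `(i+1, i)` is `(l i)^{-1/2}` for `i = 0, …, n`). -/
noncomputable def Bmat (n : ℕ) (l : Fin (n+1) → ℝ) :
    Matrix (Fin (n+2)) (Fin (n+2)) ℝ :=
  Matrix.of fun i j =>
    if h1 : (i : ℕ) + 1 = (j : ℕ) then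
      l ⟨(i : ℕ), by have := j.isLt; omega⟩ ^ (-(1/2) : ℝ)
    else if h2 : (j : ℕ) + 1 = (i : ℕ) then
      l ⟨(j : ℕ), by have := i.isLt; omega⟩ ^ (-(1/2) : ℝ)
    else 0

/-- The largest eigenvalue (Perron root) of `B(λ)`. -/
noncomputable def sigmaB (n : ℕ) (l : Fin (n+1) → ℝ) : ℝ :=
  sSup {μ : ℝ | ∃ v : Fin (n+2) → ℝ, v ≠ 0 ∧ (Bmat n l).mulVec v = μ • v}

/-- The feasible set `Λ_n`: all entries positive and `(1/(n+1)) ∑ λ_i ≤ 1`. -/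
def Feasible (n : ℕ) (l : Fin (n+1) → ℝ) : Prop :=
  (∀ i, 0 < l i) ∧ (∑ i, l i) / ((n : ℝ) + 1) ≤ 1

/-- `λ̄` is a minimizer of `σ(B(·))` over `Λ_n`. -/
def IsMinimizer (n : ℕ) (l : Fin (n+1) → ℝ) : Prop :=
  Feasible n l ∧ ∀ m : Fin (n+1) → ℝ, Feasible n m → sigmaB n l ≤ sigmaB n m

/-- A Perron vector of `B(λ)`: positive entries, Euclidean norm one,
eigenvector for the Perron root. -/
def IsPerronVector (n : ℕ) (l : Fin (n+1) → ℝ) (v : Fin (n+2) → ℝ) : Prop :=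
  (∀ i, 0 < v i) ∧ (∑ i, v i ^ 2) = 1 ∧ (Bmat n l).mulVec v = sigmaB n l • v

open Matrix Filter Topology

-- `padSeq f` is `0, f 0, …, f (m-1), 0, 0, …`; the shift matches the paper's indexing `v̄_0 = 0`.
def padSeq {m : ℕ} (f : Fin m → ℝ) : ℕ → ℝ
  | 0 => 0
  | i + 1 => if h : i < m then f ⟨i, h⟩ else 0

section padSeq

variable {m : ℕ}

@[simp] lemma padSeq_zero (f : Fin m → ℝ) : padSeq f 0 = 0 := rfl

lemma padSeq_succ (f : Fin m → ℝ) {i : ℕ} (h : i < m) : padSeq f (i + 1) = f ⟨i, h⟩ :=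
  dif_pos h

@[simp] lemma padSeq_val_succ (f : Fin m → ℝ) (k : Fin m) : padSeq f (k + 1) = f k :=
  padSeq_succ f k.isLt

lemma padSeq_of_lt (f : Fin m → ℝ) {i : ℕ} (h : m < i) : padSeq f i = 0 := by
  obtain ⟨i, rfl⟩ : ∃ j, i = j + 1 := ⟨i - 1, by omega⟩
  exact dif_neg (by omega)

lemma padSeq_comp (f : Fin m → ℝ) {φ : ℝ → ℝ} (hφ : φ 0 = 0) (i : ℕ) :
    padSeq (fun k => φ (f k)) i = φ (padSeq f i) := by
  rcases i with _ | i
  · exact hφ.symm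
  · by_cases h : i < m
    · simp only [padSeq_succ _ h]
    · simp only [padSeq, dif_neg h, hφ]

lemma padSeq_nonneg {f : Fin m → ℝ} (hf : ∀ k, 0 ≤ f k) (i : ℕ) : 0 ≤ padSeq f i := by
  rcases i with _ | i
  · rfl
  · simp only [padSeq]
    split_ifs
    exacts [hf _, le_rfl]

lemma padSeq_pos {f : Fin m → ℝ} (hf : ∀ k, 0 < f k) {i : ℕ} (h₀ : 0 < i) (hm : i ≤ m) :
    0 < padSeq f i := by
  obtain ⟨i, rfl⟩ : ∃ j, i = j + 1 := ⟨i - 1, by omega⟩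
  rw [padSeq_succ f (by omega)]
  exact hf _

lemma sum_ite_val_add_one_mul (f : Fin m → ℝ) (a : ℝ) (c : ℕ) :
    ∑ j : Fin m, (if (j : ℕ) + 1 = c then a else 0) * f j = a * padSeq f c := by
  rcases c with _ | c
  · simp
  · simp only [Nat.add_right_cancel_iff, padSeq]
    split_ifs with h
    · rw [Finset.sum_eq_single ⟨c, h⟩ (fun j _ hj => by rw [if_neg fun hc => hj (Fin.ext hc),
        zero_mul]) (by simp)]
      simp
    · rw [mul_zero]
      exact Finset.sum_eq_zero fun j _ => by rw [if_neg (by omega), zero_mul]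

end padSeq

def symmTridiag {n : ℕ} (g : Fin (n+1) → ℝ) : Matrix (Fin (n+2)) (Fin (n+2)) ℝ :=
  Matrix.of fun i j =>
    if h1 : (i : ℕ) + 1 = (j : ℕ) then
      g ⟨(i : ℕ), by have := j.isLt; omega⟩
    else if h2 : (j : ℕ) + 1 = (i : ℕ) then
      g ⟨(j : ℕ), by have := i.isLt; omega⟩
    else 0

section symmTridiag

variable {n : ℕ}

lemma Bmat_eq_symmTridiag (l : Fin (n+1) → ℝ) :
    Bmat n l = symmTridiag (fun k => l k ^ (-(1/2) : ℝ)) := rfl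

lemma symmTridiag_apply (g : Fin (n+1) → ℝ) (i j : Fin (n+2)) :
    symmTridiag g i j = (if (j : ℕ) + 1 = i + 2 then padSeq g (i + 1) else 0)
      + (if (j : ℕ) + 1 = i then padSeq g i else 0) := by
  obtain ⟨i, hi⟩ := i
  obtain ⟨j, hj⟩ := j
  simp only [symmTridiag, Matrix.of_apply]
  split_ifs <;> first | omega | simp only [add_zero, zero_add]
  · rw [padSeq_succ g (i := i) (by omega)]
  · subst_vars
    rw [padSeq_succ g (i := j) (by omega)]

lemma symmTridiag_mulVec_apply (g : Fin (n+1) → ℝ) (x : Fin (n+2) → ℝ) (i : Fin (n+2)) :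
    (symmTridiag g *ᵥ x) i = padSeq g i * padSeq x i + padSeq g (i + 1) * padSeq x (i + 2) := by
  simp only [mulVec, dotProduct, symmTridiag_apply, add_mul, Finset.sum_add_distrib,
    sum_ite_val_add_one_mul]
  ring

lemma symmTridiag_isSymm (g : Fin (n+1) → ℝ) : (symmTridiag g).IsSymm := by
  ext i j
  simp only [Matrix.transpose_apply, symmTridiag, Matrix.of_apply]
  split_ifs <;> first | omega | rfl

lemma symmTridiag_nonneg {g : Fin (n+1) → ℝ} (hg : ∀ k, 0 ≤ g k) (i j : Fin (n+2)) :
    0 ≤ symmTridiag g i j := by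
  rw [symmTridiag_apply]
  have := padSeq_nonneg hg
  exact add_nonneg (by split_ifs <;> simp [this]) (by split_ifs <;> simp [this])

lemma padSeq_symmTridiag_eigen {g : Fin (n+1) → ℝ} {x : Fin (n+2) → ℝ} {μ : ℝ}
    (hx : symmTridiag g *ᵥ x = μ • x) (i : ℕ) :
    padSeq g i * padSeq x i + padSeq g (i + 1) * padSeq x (i + 2) = μ * padSeq x (i + 1) := by
  by_cases hi : i < n + 2
  · have := congrFun hx ⟨i, hi⟩
    rwa [symmTridiag_mulVec_apply, Pi.smul_apply, smul_eq_mul, ← padSeq_succ x hi] at this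
  · rw [padSeq_of_lt g (i := i) (by omega), padSeq_of_lt g (i := i + 1) (by omega),
      padSeq_of_lt x (i := i + 1) (by omega)]
    ring

lemma eq_zero_of_symmTridiag_eigen {g : Fin (n+1) → ℝ} (hg : ∀ k, g k ≠ 0)
    {x : Fin (n+2) → ℝ} {μ : ℝ} (hx : symmTridiag g *ᵥ x = μ • x) (hx0 : x 0 = 0) : x = 0 := by
  have key : ∀ i, padSeq x i = 0 ∧ padSeq x (i + 1) = 0 := by
    intro i
    induction i with
    | zero => exact ⟨rfl, by simpa [padSeq] using hx0⟩
    | succ i ih =>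
      refine ⟨ih.2, ?_⟩
      by_cases hi : i < n + 1
      · have hrow := padSeq_symmTridiag_eigen hx i
        rw [ih.1, ih.2, padSeq_succ g hi] at hrow
        simpa [hg] using hrow
      · exact padSeq_of_lt x (by omega)
  funext k
  simpa using (key k).2

lemma symmTridiag_eigen_eq_smul {g : Fin (n+1) → ℝ} (hg : ∀ k, g k ≠ 0)
    {v x : Fin (n+2) → ℝ} {μ : ℝ} (hv : symmTridiag g *ᵥ v = μ • v) (hv0 : v 0 ≠ 0)
    (hx : symmTridiag g *ᵥ x = μ • x) : x = (x 0 / v 0) • v := by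
  refine sub_eq_zero.mp (eq_zero_of_symmTridiag_eigen hg (μ := μ) ?_ ?_)
  · rw [mulVec_sub, mulVec_smul, hx, hv, smul_sub, smul_comm]
  · simp [hv0]

lemma dotProduct_symmTridiag_mulVec (g : Fin (n+1) → ℝ) (x : Fin (n+2) → ℝ) :
    x ⬝ᵥ (symmTridiag g *ᵥ x) = 2 * ∑ k, g k * (x k.castSucc * x k.succ) := by
  have hx : ∀ i : Fin (n+2), x i = padSeq x (i + 1) := fun i => (padSeq_val_succ x i).symm
  simp only [dotProduct, symmTridiag_mulVec_apply, hx, mul_add, Finset.sum_add_distrib]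
  rw [Fin.sum_univ_succ (n := n + 1), Fin.sum_univ_castSucc (n := n + 1)]
  simp only [Fin.val_zero, Fin.val_succ, Fin.val_castSucc, Fin.val_last, padSeq_zero,
    padSeq_of_lt g (i := n + 1 + 1) (by omega), padSeq_val_succ, mul_zero, zero_mul, zero_add,
    add_zero, two_mul]
  congr 1 <;> exact Finset.sum_congr rfl fun i _ => by ring

lemma hasDerivAt_symmTridiag_apply {G : ℝ → Fin (n+1) → ℝ} {G' : Fin (n+1) → ℝ} {t : ℝ}
    (hG : ∀ k, HasDerivAt (fun s => G s k) (G' k) t) (i j : Fin (n+2)) :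
    HasDerivAt (fun s => symmTridiag (G s) i j) (symmTridiag G' i j) t := by
  simp only [symmTridiag, Matrix.of_apply]
  split_ifs
  exacts [hG _, hG _, hasDerivAt_const _ _]

end symmTridiag

section PerronBounds

variable {ι : Type*} [Fintype ι]

lemma eigenvalue_le_of_mulVec_le {A : Matrix ι ι ℝ} (hA : ∀ i j, 0 ≤ A i j) {w : ι → ℝ}
    (hw : ∀ i, 0 < w i) {κ : ℝ} (hAw : ∀ i, (A *ᵥ w) i ≤ κ * w i) {μ : ℝ} {u : ι → ℝ}
    (hu : u ≠ 0) (hμ : A *ᵥ u = μ • u) : μ ≤ κ := by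
  obtain ⟨j, hj⟩ := Function.ne_iff.mp hu
  -- `s` is the least scalar with `|u| ≤ s • w`; the row where this is tight bounds `|μ|`
  obtain ⟨i, -, hi⟩ := Finset.exists_max_image Finset.univ (fun i => |u i| / w i)
    ⟨j, Finset.mem_univ _⟩
  set s := |u i| / w i
  have hs : 0 < s := (div_pos (abs_pos.mpr hj) (hw j)).trans_le (hi j (Finset.mem_univ _))
  have hui : |u i| = s * w i := (div_mul_cancel₀ _ (hw i).ne').symm
  have hle : ∀ j, |u j| ≤ s * w j := fun j => by
    have := hi j (Finset.mem_univ _)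
    rwa [div_le_iff₀ (hw j)] at this
  have key : |μ| * |u i| ≤ κ * |u i| := calc
    |μ| * |u i| = |∑ j, A i j * u j| := by
      rw [← abs_mul, ← smul_eq_mul, ← Pi.smul_apply, ← hμ]; rfl
    _ ≤ ∑ j, A i j * |u j| := by
      refine (Finset.abs_sum_le_sum_abs _ _).trans_eq (Finset.sum_congr rfl fun j _ => ?_)
      rw [abs_mul, abs_of_nonneg (hA i j)]
    _ ≤ ∑ j, A i j * (s * w j) :=
      Finset.sum_le_sum fun j _ => mul_le_mul_of_nonneg_left (hle j) (hA i j)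
    _ = s * (A *ᵥ w) i := by
      simp only [mulVec, dotProduct, Finset.mul_sum]
      exact Finset.sum_congr rfl fun j _ => by ring
    _ ≤ s * (κ * w i) := mul_le_mul_of_nonneg_left (hAw i) hs.le
    _ = κ * |u i| := by rw [hui]; ring
  have hpos : 0 < |u i| := by rw [hui]; exact mul_pos hs (hw i)
  exact (le_abs_self μ).trans (le_of_mul_le_mul_right key hpos)

lemma sSup_eigenvalues_lt [Nonempty ι] {A : Matrix ι ι ℝ} (hA : ∀ i j, 0 ≤ A i j)
    {w : ι → ℝ} (hw : ∀ i, 0 < w i) {s : ℝ} (hAw : ∀ i, (A *ᵥ w) i < s * w i) :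
    sSup {μ : ℝ | ∃ u : ι → ℝ, u ≠ 0 ∧ A *ᵥ u = μ • u} < s := by
  set κ := Finset.univ.sup' Finset.univ_nonempty (fun i => (A *ᵥ w) i / w i)
  have hκs : κ < s := (Finset.sup'_lt_iff _).mpr fun i _ => (div_lt_iff₀ (hw i)).mpr (hAw i)
  have hAwκ : ∀ i, (A *ᵥ w) i ≤ κ * w i := fun i =>
    (div_le_iff₀ (hw i)).mp (Finset.le_sup' (fun i => (A *ᵥ w) i / w i) (Finset.mem_univ i))
  obtain ⟨i⟩ := ‹Nonempty ι›
  have hκ : 0 ≤ κ := by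
    refine nonneg_of_mul_nonneg_left ((Finset.sum_nonneg fun j _ => ?_).trans (hAwκ i)) (hw i)
    exact mul_nonneg (hA i j) (hw j).le
  refine (Real.sSup_le ?_ hκ).trans_lt hκs
  rintro μ ⟨u, hu, hμ⟩
  exact eigenvalue_le_of_mulVec_le hA hw hAwκ hu hμ

end PerronBounds

section Fredholm

variable {ι : Type*} [Fintype ι] [DecidableEq ι]

lemma exists_mulVec_eq_of_dotProduct_eq_zero {M : Matrix ι ι ℝ} (hM : M.IsSymm) {v : ι → ℝ}
    (hker : ∀ x, M *ᵥ x = 0 → ∃ c : ℝ, x = c • v) {y : ι → ℝ} (hy : v ⬝ᵥ y = 0) :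
    ∃ η, M *ᵥ η = y := by
  have hT : M.toEuclideanLin.IsSymmetric :=
    isSymmetric_toEuclideanLin_iff.mpr (isHermitian_iff_isSymm.mpr hM)
  have hy' : WithLp.toLp 2 y ∈ LinearMap.range M.toEuclideanLin := by
    rw [← Submodule.orthogonal_orthogonal (LinearMap.range _), hT.orthogonal_range,
      Submodule.mem_orthogonal]
    intro u hu
    obtain ⟨c, hc⟩ := hker u.ofLp (by simpa [toLpLin_apply] using hu)
    simp [EuclideanSpace.inner_eq_star_dotProduct, hc, dotProduct_comm y, hy]
  obtain ⟨η, hη⟩ := hy'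
  exact ⟨η.ofLp, by simpa [toLpLin_apply] using congrArg WithLp.ofLp hη⟩

end Fredholm

lemma HasDerivAt.eventually_neg_nhdsGT {f : ℝ → ℝ} {f' x : ℝ} (hf : HasDerivAt f f' x)
    (hf' : f' < 0) (hx : f x = 0) : ∀ᶠ t in 𝓝[>] x, f t < 0 := by
  filter_upwards [nhdsWithin_le_nhds (eventually_nhdsWithin_sign_eq_of_deriv_neg
    (hf.deriv ▸ hf') hx), self_mem_nhdsWithin] with t ht (hxt : x < t)
  rwa [sign_neg (sub_neg.mpr hxt), sign_eq_neg_one_iff] at ht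

lemma hasDerivAt_mulVec_apply {ι : Type*} [Fintype ι] {M : ℝ → Matrix ι ι ℝ}
    {M' : Matrix ι ι ℝ} {w : ℝ → ι → ℝ} {w' : ι → ℝ} {t : ℝ}
    (hM : ∀ i j, HasDerivAt (fun s => M s i j) (M' i j) t)
    (hw : ∀ j, HasDerivAt (fun s => w s j) (w' j) t) (i : ι) :
    HasDerivAt (fun s => (M s *ᵥ w s) i) ((M' *ᵥ w t) i + (M t *ᵥ w') i) t := by
  simp only [mulVec, dotProduct, ← Finset.sum_add_distrib]
  exact HasDerivAt.fun_sum fun j _ => (hM i j).mul (hw j)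

theorem eventually_exists_pos_mulVec_lt {ι : Type*} [Fintype ι] [DecidableEq ι]
    {B : ℝ → Matrix ι ι ℝ} {D : Matrix ι ι ℝ}
    (hB : ∀ i j, HasDerivAt (fun t => B t i j) (D i j) 0) (hsymm : (B 0).IsSymm) {σ : ℝ}
    {v : ι → ℝ} (hv : ∀ i, 0 < v i) (hBv : B 0 *ᵥ v = σ • v)
    (hsimple : ∀ x, B 0 *ᵥ x = σ • x → ∃ c : ℝ, x = c • v) (hD : v ⬝ᵥ (D *ᵥ v) < 0) :
    ∀ᶠ t in 𝓝[>] 0, ∃ w : ι → ℝ, (∀ i, 0 < w i) ∧ ∀ i, (B t *ᵥ w) i < σ * w i := by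
  have hvv : 0 < v ⬝ᵥ v := by
    have : Nonempty ι := by
      by_contra h
      rw [not_nonempty_iff] at h
      simp [dotProduct] at hD
    exact Finset.sum_pos (fun i _ => mul_pos (hv i) (hv i)) Finset.univ_nonempty
  set c := v ⬝ᵥ (D *ᵥ v) / (v ⬝ᵥ v)
  have hc : c < 0 := div_neg_of_neg_of_pos hD hvv
  -- first-order correction `η` of the eigenvector, chosen so that
  -- `B t *ᵥ (v + t • η) - σ • (v + t • η)` has derivative `c • v` at `t = 0`
  obtain ⟨η, hη⟩ : ∃ η, (B 0 - σ • 1) *ᵥ η = c • v - D *ᵥ v := by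
    refine exists_mulVec_eq_of_dotProduct_eq_zero (v := v) (hsymm.sub (isSymm_one.smul σ))
      (fun x hx => ?_) ?_
    · rw [sub_mulVec, smul_mulVec, one_mulVec, sub_eq_zero] at hx
      exact hsimple x hx
    · rw [dotProduct_sub, dotProduct_smul, smul_eq_mul, div_mul_cancel₀ _ hvv.ne', sub_self]
  set w : ℝ → ι → ℝ := fun t j => v j + t * η j
  have hw : ∀ j, HasDerivAt (fun t => w t j) (η j) 0 := fun j =>
    (hasDerivAt_mul_const (η j)).const_add (v j)
  have hw0 : w 0 = v := by funext j; simp [w]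
  have hneg : ∀ i, ∀ᶠ t in 𝓝[>] 0, (B t *ᵥ w t) i - σ * w t i < 0 := by
    intro i
    have hderiv := (hasDerivAt_mulVec_apply hB hw i).sub ((hw i).const_mul σ)
    refine hderiv.eventually_neg_nhdsGT ?_ ?_
    · have := congrFun hη i
      simp only [sub_mulVec, smul_mulVec, one_mulVec, Pi.sub_apply, Pi.smul_apply,
        smul_eq_mul] at this
      rw [hw0]
      linarith [mul_neg_of_neg_of_pos hc (hv i)]
    · simp [hw0, hBv]
  have hpos : ∀ i, ∀ᶠ t in 𝓝[>] 0, 0 < w t i := fun i =>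
    nhdsWithin_le_nhds ((hw i).continuousAt.eventually (lt_mem_nhds (by simpa [hw0] using hv i)))
  filter_upwards [eventually_all.mpr hneg, eventually_all.mpr hpos] with t hnegt hpost
  exact ⟨w t, hpost, fun i => sub_neg.mp (hnegt i)⟩

section Minimizer

variable {n : ℕ}

lemma sigmaB_lt_of_mulVec_lt {m : Fin (n+1) → ℝ} (hm : ∀ k, 0 < m k) {w : Fin (n+2) → ℝ}
    (hw : ∀ i, 0 < w i) {s : ℝ} (h : ∀ i, (Bmat n m *ᵥ w) i < s * w i) : sigmaB n m < s :=
  sSup_eigenvalues_lt (symmTridiag_nonneg fun k => (rpow_pos_of_pos (hm k) _).le) hw h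

lemma hasDerivAt_Bmat_apply {l : Fin (n+1) → ℝ} (hl : ∀ k, 0 < l k) (δ : Fin (n+1) → ℝ)
    (i j : Fin (n+2)) :
    HasDerivAt (fun t => Bmat n (fun k => l k + t * δ k) i j)
      (symmTridiag (fun k => -(1/2) * l k ^ (-(3/2) : ℝ) * δ k) i j) 0 := by
  refine hasDerivAt_symmTridiag_apply (G := fun t k => (l k + t * δ k) ^ (-(1/2) : ℝ))
    (fun k => ?_) i j
  have := ((hasDerivAt_mul_const (x := 0) (δ k)).const_add (l k)).rpow_const (p := -(1/2))
    (Or.inl (by simpa using (hl k).ne'))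
  convert this using 1
  norm_num
  ring

theorem IsMinimizer.weight_eq {l : Fin (n+1) → ℝ} (hmin : IsMinimizer n l) {v : Fin (n+2) → ℝ}
    (hv : IsPerronVector n l v) (k k' : Fin (n+1)) :
    l k ^ (-(3/2) : ℝ) * (v k.castSucc * v k.succ)
      = l k' ^ (-(3/2) : ℝ) * (v k'.castSucc * v k'.succ) := by
  obtain ⟨⟨hl, hsum⟩, hmin⟩ := hmin
  obtain ⟨hvpos, -, hveig⟩ := hv
  set W : Fin (n+1) → ℝ := fun k => l k ^ (-(3/2) : ℝ) * (v k.castSucc * v k.succ)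
  suffices h : ∀ p p', ¬ W p' < W p from le_antisymm (not_lt.mp (h _ _)) (not_lt.mp (h _ _))
  intro p p' hlt
  -- move weight from `λ_p'` to `λ_p`: to first order this lowers the Perron root by `W p - W p'`
  set δ : Fin (n+1) → ℝ := Pi.single p 1 - Pi.single p' 1
  set B : ℝ → Matrix (Fin (n+2)) (Fin (n+2)) ℝ := fun t => Bmat n (fun k => l k + t * δ k)
  have hB0 : B 0 = Bmat n l := by simp [B]
  have hg : ∀ k, l k ^ (-(1/2) : ℝ) ≠ 0 := fun k => (rpow_pos_of_pos (hl k) _).ne'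
  have hD : v ⬝ᵥ (symmTridiag (fun k => -(1/2) * l k ^ (-(3/2) : ℝ) * δ k) *ᵥ v) < 0 := by
    rw [dotProduct_symmTridiag_mulVec]
    simp only [δ, Pi.sub_apply, Pi.single_apply, mul_sub, sub_mul, mul_ite, ite_mul, mul_one,
      mul_zero, zero_mul, Finset.sum_sub_distrib, Finset.sum_ite_eq', Finset.mem_univ, if_true]
    linarith
  have hpert := eventually_exists_pos_mulVec_lt (B := B) (hasDerivAt_Bmat_apply hl δ)
    (by rw [hB0, Bmat_eq_symmTridiag]; exact symmTridiag_isSymm _) hvpos (by rwa [hB0])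
    (fun x hx => ⟨_, symmTridiag_eigen_eq_smul hg hveig (hvpos 0).ne' (by rwa [hB0] at hx)⟩) hD
  have hfeas : ∀ᶠ t in 𝓝[>] 0, ∀ k, 0 < l k + t * δ k := by
    refine nhdsWithin_le_nhds (eventually_all.mpr fun k => ?_)
    exact ((continuous_const.add (continuous_id.mul continuous_const)).tendsto' 0 (l k)
      (by simp)).eventually (lt_mem_nhds (hl k))
  obtain ⟨t, ⟨w, hw, hBw⟩, hpos⟩ := (hpert.and hfeas).exists
  have hsum' : (∑ k, (l k + t * δ k)) / ((n : ℝ) + 1) ≤ 1 := by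
    simpa [Finset.sum_add_distrib, ← Finset.mul_sum, δ, Finset.sum_sub_distrib] using hsum
  exact (sigmaB_lt_of_mulVec_lt hpos hw hBw).not_ge (hmin _ ⟨hpos, hsum'⟩)

lemma IsMinimizer.exists_padSeq_mul_eq {l : Fin (n+1) → ℝ} (hmin : IsMinimizer n l)
    {v : Fin (n+2) → ℝ} (hv : IsPerronVector n l v) :
    ∃ K, ∀ i, padSeq v i * padSeq v (i + 1) = K * padSeq l i ^ (3/2 : ℝ) := by
  refine ⟨l 0 ^ (-(3/2) : ℝ) * (v (0 : Fin (n+1)).castSucc * v (0 : Fin (n+1)).succ), fun i => ?_⟩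
  rcases i with _ | k
  · simp
  by_cases hk : k < n + 1
  · have hl := hmin.1.1 ⟨k, hk⟩
    have hw := hmin.weight_eq hv ⟨k, hk⟩ 0
    rw [padSeq_succ v (by omega), padSeq_succ v (by omega), padSeq_succ l hk, ← hw,
      mul_right_comm, ← rpow_add hl]
    norm_num
  · rw [padSeq_of_lt v (i := k + 2) (by omega), padSeq_of_lt l (i := k + 1) (by omega)]
    simp

end Minimizer

lemma mul_add_eq_of_row_of_weight {V L : ℕ → ℝ} {σ K : ℝ} (hL : ∀ i, 0 ≤ L i)
    (hrow : ∀ i, L i ^ (-(1/2) : ℝ) * V i + L (i + 1) ^ (-(1/2) : ℝ) * V (i + 2) = σ * V (i + 1))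
    (hweight : ∀ i, V i * V (i + 1) = K * L i ^ (3/2 : ℝ)) (i : ℕ) :
    K * (L i + L (i + 1)) = σ * V (i + 1) ^ 2 := by
  have h : ∀ j, L j ^ (-(1/2) : ℝ) * (V j * V (j + 1)) = K * L j := fun j => by
    rw [hweight, mul_left_comm, ← rpow_add' (hL j) (by norm_num)]
    norm_num
  linear_combination V (i + 1) * hrow i - h i - h (i + 1)

lemma rpow_two_thirds_recurrence {V L : ℕ → ℝ} {σ K : ℝ} (hV : ∀ i, 0 ≤ V i)
    (hL : ∀ i, 0 ≤ L i) (hV1 : 0 < V 1) (hV2 : 0 < V 2) (hL0 : L 0 = 0) (hL1 : 0 < L 1)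
    (henergy : ∀ i, K * (L i + L (i + 1)) = σ * V (i + 1) ^ 2)
    (hweight : ∀ i, V i * V (i + 1) = K * L i ^ (3/2 : ℝ)) {i : ℕ} (hi : 0 < V (i + 1)) :
    (V i / V 1) ^ (2/3 : ℝ) + (V (i + 2) / V 1) ^ (2/3 : ℝ)
      = σ ^ (2/3 : ℝ) * L 1 ^ (1/3 : ℝ) * ((V (i + 1) / V 1) ^ (2/3 : ℝ)) ^ 2 := by
  set A : ℕ → ℝ := fun j => (V j / V 1) ^ (2/3 : ℝ)
  set r := σ ^ (2/3 : ℝ) * L 1 ^ (1/3 : ℝ)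
  have hK : 0 < K :=
    pos_of_mul_pos_left (hweight 1 ▸ mul_pos hV1 hV2) (rpow_pos_of_pos hL1 _).le
  have hK1 : K * L 1 = σ * V 1 ^ 2 := by simpa [hL0] using henergy 0
  have hσ : 0 < σ := pos_of_mul_pos_left (hK1 ▸ mul_pos hK hL1) (sq_nonneg _)
  have hA : ∀ j, 0 ≤ A j := fun j => rpow_nonneg (div_nonneg (hV j) hV1.le) _
  have hA3 : ∀ j, A j ^ 3 = (V j / V 1) ^ 2 := fun j => by
    rw [← rpow_mul_natCast (div_nonneg (hV j) hV1.le)]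
    norm_num
  have hr3 : r ^ 3 = σ ^ 2 * L 1 := by
    rw [mul_pow, ← rpow_mul_natCast hσ.le, ← rpow_mul_natCast hL1.le]
    norm_num
  have hr : 0 < r := by positivity
  -- `K λ_j` is, up to a constant, the product of neighbouring terms: compare cubes
  set c := σ * V 1 ^ 2 / r
  have hc : 0 < c := by positivity
  have hKL : ∀ j, K * L j = c * (A j * A (j + 1)) := by
    intro j
    refine (pow_left_inj₀ (mul_nonneg hK.le (hL j))
      (mul_nonneg hc.le (mul_nonneg (hA j) (hA _))) three_ne_zero).mp ?_
    have hw2 : (V j * V (j + 1)) ^ 2 = K ^ 2 * L j ^ 3 := by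
      rw [hweight, mul_pow, ← rpow_mul_natCast (hL j)]
      norm_num
    have hc3 : c ^ 3 = K * V 1 ^ 4 := by
      rw [div_pow, hr3, div_eq_iff (by positivity)]
      linear_combination (-(σ ^ 2 * V 1 ^ 4)) * hK1
    calc (K * L j) ^ 3 = K * V 1 ^ 4 * (K ^ 2 * L j ^ 3) / V 1 ^ 4 := by
          field_simp
      _ = (c * (A j * A (j + 1))) ^ 3 := by
          rw [mul_pow, mul_pow, hA3, hA3, hc3, ← hw2]
          field_simp
  have hsq : σ * V (i + 1) ^ 2 = c * r * A (i + 1) ^ 3 := by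
    rw [hA3, div_mul_cancel₀ _ hr.ne']
    field_simp
  have hcA : 0 < c * A (i + 1) := mul_pos (by positivity) (rpow_pos_of_pos (div_pos hi hV1) _)
  refine mul_left_cancel₀ hcA.ne' ?_
  linear_combination henergy i - hKL i - hKL (i + 1) + hsq

structure IsPositiveSolution (r : ℝ) (N : ℕ) (A : ℕ → ℝ) : Prop where
  zero : A 0 = 0
  last : A N = 0
  pos : ∀ j, 0 < j → j < N → 0 < A j
  recurrence : ∀ j, j + 2 ≤ N → A j + A (j + 2) = r * A (j + 1) ^ 2

namespace IsPositiveSolution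

variable {r : ℝ} {N : ℕ} {A B : ℕ → ℝ}

lemma reflect (hA : IsPositiveSolution r N A) : IsPositiveSolution r N (fun j => A (N - j)) where
  zero := by simpa using hA.last
  last := by simpa using hA.zero
  pos j h₀ hN := hA.pos _ (by omega) (by omega)
  recurrence j hj := by
    obtain ⟨m, rfl⟩ : ∃ m, N = j + 2 + m := ⟨N - (j + 2), by omega⟩
    have := hA.recurrence m (by omega)
    rw [show j + 2 + m - j = m + 2 by omega, show j + 2 + m - (j + 1) = m + 1 by omega,
      show j + 2 + m - (j + 2) = m by omega]
    linarith

lemma eq_of_apply_one_eq (hA : IsPositiveSolution r N A) (hB : IsPositiveSolution r N B)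
    (h₁ : A 1 = B 1) : ∀ j ≤ N, A j = B j := by
  intro j
  induction j using Nat.twoStepInduction with
  | zero => exact fun _ => hA.zero.trans hB.zero.symm
  | one => exact fun _ => h₁
  | more j ih₀ ih₁ =>
    intro hj
    have hA' := hA.recurrence j hj
    have hB' := hB.recurrence j hj
    rw [ih₀ (by omega), ih₁ (by omega)] at hA'
    linarith

lemma apply_one_le (hA : IsPositiveSolution r N A) (hB : IsPositiveSolution r N B) (hr : 0 < r)
    (hN : 2 ≤ N) : A 1 ≤ B 1 := by
  by_contra! hlt
  -- the discrete Wronskian `W` decreases as long as `B < A`, yet vanishes at both ends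
  set W : ℕ → ℝ := fun j => A j * B (j + 1) - A (j + 1) * B j
  have hstep : ∀ j, j + 2 ≤ N →
      W (j + 1) = W j + r * A (j + 1) * B (j + 1) * (B (j + 1) - A (j + 1)) := by
    intro j hj
    simp only [W]
    linear_combination A (j + 1) * hB.recurrence j hj - B (j + 1) * hA.recurrence j hj
  have key : ∀ j, j + 2 ≤ N → B (j + 1) < A (j + 1) ∧ W (j + 1) < 0 := by
    intro j
    induction j with
    | zero =>
      intro hj
      refine ⟨hlt, ?_⟩
      rw [hstep 0 hj]
      have := mul_pos (mul_pos hr (hA.pos 1 one_pos (by omega))) (hB.pos 1 one_pos (by omega))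
      simp only [W, hA.zero, hB.zero]
      nlinarith
    | succ j ih =>
      intro hj
      obtain ⟨hlt', hW⟩ := ih (by omega)
      have hA₁ := hA.pos (j + 1) (by omega) (by omega)
      have hA₂ := hA.pos (j + 2) (by omega) (by omega)
      have hB₁ := hB.pos (j + 1) (by omega) (by omega)
      have hB₂ := hB.pos (j + 2) (by omega) (by omega)
      have hlt₂ : B (j + 2) < A (j + 2) := by
        simp only [W] at hW
        nlinarith
      refine ⟨hlt₂, ?_⟩
      rw [hstep (j + 1) hj]
      have := mul_pos (mul_pos hr hA₂) hB₂
      nlinarith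
  obtain ⟨M, rfl⟩ : ∃ M, N = M + 2 := ⟨N - 2, by omega⟩
  have := (key M le_rfl).2
  simp [W, hA.last, hB.last] at this

lemma symm (hA : IsPositiveSolution r N A) (hr : 0 < r) (hN : 2 ≤ N) :
    ∀ j ≤ N, A j = A (N - j) :=
  hA.eq_of_apply_one_eq hA.reflect
    (le_antisymm (hA.apply_one_le hA.reflect hr hN) (hA.reflect.apply_one_le hA hr hN))

lemma lt_two_div (hA : IsPositiveSolution r N A) (hr : 0 < r) : ∀ j ≤ N, A j < 2 / r := by
  have h2r : 0 < 2 / r := by positivity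
  -- a maximum is strictly below `2 / r`: otherwise concavity forces the left neighbour to be a
  -- maximum as well, and one descends to `A 0 = 0`
  have hmax : ∀ k ≤ N, (∀ j ≤ N, A j ≤ A k) → A k < 2 / r := by
    intro k
    induction k with
    | zero => exact fun _ _ => hA.zero ▸ h2r
    | succ k ih =>
      intro hk hkmax
      rcases eq_or_lt_of_le hk with hkN | hkN
      · exact hkN ▸ hA.last ▸ h2r
      by_contra! hge
      have hpos := hA.pos (k + 1) (by omega) hkN
      have h2 : 2 ≤ r * A (k + 1) := (div_le_iff₀' hr).mp hge
      have hrec := hA.recurrence k (by omega)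
      have hle₀ := hkmax k (by omega)
      have hle₂ := hkmax (k + 2) (by omega)
      have heq : A k = A (k + 1) := by nlinarith
      exact hge.not_gt (heq ▸ ih (by omega) (heq ▸ hkmax))
  obtain ⟨k, hk, hkmax⟩ := Finset.exists_max_image (Finset.range (N + 1)) A ⟨0, by simp⟩
  simp only [Finset.mem_range, Nat.lt_succ_iff] at hk hkmax
  exact fun j hj => (hkmax j hj).trans_lt (hmax k hk hkmax)

lemma lt_succ_of_lt_half (hA : IsPositiveSolution r N A) (hr : 0 < r) (hN : 2 ≤ N) {i : ℕ}
    (hi : i < N / 2) : A i < A (i + 1) := by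
  -- the increments `b j = A (j+1) - A j` are strictly decreasing and antisymmetric about `N / 2`
  set b : ℕ → ℝ := fun j => A (j + 1) - A j
  have hanti : StrictAntiOn b (Set.Iic (N - 1)) := by
    refine strictAntiOn_Iic_of_succ_lt fun j hj => ?_
    have hrec := hA.recurrence j (by omega)
    have hpos := hA.pos (j + 1) (by omega) (by omega)
    have hlt := (lt_div_iff₀' hr).mp (hA.lt_two_div hr (j + 1) (by omega))
    simp only [b, Order.succ_eq_add_one]
    nlinarith
  have hb : b (N - 1 - i) = - b i := by
    simp only [b, show N - 1 - i + 1 = N - i by omega, ← hA.symm hr hN i (by omega)]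
    rw [hA.symm hr hN (N - 1 - i) (by omega), show N - (N - 1 - i) = i + 1 by omega]
    ring
  have := hanti (Set.mem_Iic.mpr (by omega)) (Set.mem_Iic.mpr (by omega))
    (show i < N - 1 - i by omega)
  simp only [hb, b] at this
  linarith

lemma coeff_pos (hA : IsPositiveSolution r N A) (hN : 3 ≤ N) : 0 < r := by
  have h := hA.recurrence 0 (by omega)
  rw [hA.zero, zero_add] at h
  exact pos_of_mul_pos_left (h ▸ hA.pos 2 (by omega) (by omega)) (sq_nonneg _)

lemma lt_sqrt_two (hA : IsPositiveSolution r N A) (hr : 0 < r) (hN : 3 ≤ N) (h₁ : A 1 = 1) :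
    r < √2 := by
  have h := hA.recurrence 0 (by omega)
  rw [hA.zero, h₁, zero_add, one_pow, mul_one] at h
  have := (lt_div_iff₀ hr).mp (h ▸ hA.lt_two_div hr 2 (by omega))
  exact (lt_sqrt hr.le).mpr (by nlinarith)

lemma sqrt_two_lt_two_div (hA : IsPositiveSolution r N A) (hr : 0 < r) (hN : 3 ≤ N)
    (h₁ : A 1 = 1) : √2 < 2 / r := by
  rw [lt_div_iff₀ hr]
  calc √2 * r < √2 * √2 := mul_lt_mul_of_pos_left (hA.lt_sqrt_two hr hN h₁) (by positivity)
    _ = 2 := mul_self_sqrt zero_le_two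

end IsPositiveSolution

theorem IsMinimizer.isPositiveSolution {n : ℕ} {l : Fin (n+1) → ℝ} (hmin : IsMinimizer n l)
    {v : Fin (n+2) → ℝ} (hv : IsPerronVector n l v) :
    IsPositiveSolution (sigmaB n l ^ (2/3 : ℝ) * l 0 ^ (1/3 : ℝ)) (n + 3)
      (fun j => (padSeq v j / v 0) ^ (2/3 : ℝ)) := by
  obtain ⟨K, hweight⟩ := hmin.exists_padSeq_mul_eq hv
  obtain ⟨hl, -⟩ := hmin.1
  obtain ⟨hvpos, -, heig⟩ := hv
  have hrow := padSeq_symmTridiag_eigen (g := fun k => l k ^ (-(1/2) : ℝ)) heig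
  simp only [padSeq_comp l (φ := fun x => x ^ (-(1/2) : ℝ)) (zero_rpow (by norm_num))] at hrow
  have hV : ∀ {j}, 0 < j → j ≤ n + 2 → 0 < padSeq v j := fun h₀ hj => padSeq_pos hvpos h₀ hj
  refine ⟨by simp, by simp [padSeq_of_lt v (i := n + 3) (by omega)],
    fun j h₀ hj => rpow_pos_of_pos (div_pos (hV h₀ (by omega)) (hvpos 0)) _, fun j hj => ?_⟩
  rw [← show padSeq v 1 = v 0 from padSeq_succ v (by omega),
    ← show padSeq l 1 = l 0 from padSeq_succ l (by omega)]
  exact rpow_two_thirds_recurrence (padSeq_nonneg fun i => (hvpos i).le)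
    (padSeq_nonneg fun k => (hl k).le) (hV one_pos (by omega)) (hV two_pos (by omega)) rfl
    (padSeq_pos hl one_pos (by omega))
    (mul_add_eq_of_row_of_weight (padSeq_nonneg fun k => (hl k).le) hrow hweight) hweight
    (hV j.succ_pos (by omega))

theorem stmt_11_general (n : ℕ) (l : Fin (n+1) → ℝ)
    (hmin : IsMinimizer n l) (v : Fin (n+2) → ℝ) (hv : IsPerronVector n l v)
    (a : ℕ → ℝ) (ha0 : a 0 = 0)
    (ha : ∀ j : Fin (n+2), a ((j : ℕ) + 1) = (v j / v 0) ^ ((2:ℝ)/3))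
    (r q : ℝ) (hr : r = sigmaB n l ^ ((2:ℝ)/3) * l 0 ^ ((1:ℝ)/3))
    (hq : q = 2 / r) :
    (∀ i : ℕ, i < (n+3)/2 → a i < a (i+1)) ∧
    a ((n+3)/2) < q ∧ r < Real.sqrt 2 ∧ Real.sqrt 2 < q := by
  subst hr hq
  have hsol := hmin.isPositiveSolution hv
  have haA : ∀ j ≤ n + 2, a j = (padSeq v j / v 0) ^ (2/3 : ℝ) := by
    rintro (_ | j) hj
    · simp [ha0]
    · rw [ha ⟨j, by omega⟩, padSeq_succ v (by omega)]
  have h₁ : (padSeq v 1 / v 0) ^ (2/3 : ℝ) = 1 := by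
    simp [padSeq_succ v (i := 0) (by omega), (hv.1 0).ne']
  have hr₀ := hsol.coeff_pos le_add_self
  refine ⟨fun i hi => ?_, ?_, hsol.lt_sqrt_two hr₀ le_add_self h₁,
    hsol.sqrt_two_lt_two_div hr₀ le_add_self h₁⟩
  · rw [haA i (by omega), haA (i + 1) (by omega)]
    exact hsol.lt_succ_of_lt_half hr₀ (by omega) hi
  · rw [haA _ (by omega)]
    exact hsol.lt_two_div hr₀ _ (by omega)

/-- strict monotonicity of the `ā_i` up to the middle, the bound by
`q̄ = 2/r̄`, and the bounds `r̄ < √2 < q̄`. -/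
theorem stmt_11 (n : ℕ) (hn : 1 ≤ n) (l : Fin (n+1) → ℝ)
    (hmin : IsMinimizer n l) (v : Fin (n+2) → ℝ) (hv : IsPerronVector n l v)
    (a : ℕ → ℝ) (ha0 : a 0 = 0)
    (ha : ∀ j : Fin (n+2), a ((j : ℕ) + 1) = (v j / v 0) ^ ((2:ℝ)/3))
    (r q : ℝ) (hr : r = sigmaB n l ^ ((2:ℝ)/3) * l 0 ^ ((1:ℝ)/3))
    (hq : q = 2 / r) :
    (∀ i : ℕ, i < (n+3)/2 → a i < a (i+1)) ∧
    a ((n+3)/2) < q ∧ r < Real.sqrt 2 ∧ Real.sqrt 2 < q :=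
  stmt_11_general n l hmin v hv a ha0 ha r q hr hq
end

section
/- Let n ∈ ℕ with n > 1 and let λ̄ be a minimizer of σ(B(·)) over Λ_n with σ̄ = σ(B(λ̄)). Then 2√(1 − 4 ln(2)/(n+1)) < σ̄ < 2√(1 − 1/(n+1)). -/
/-!
Lower bound: the Rayleigh quotient of the symmetric matrix `B(λ)` at the all-ones vector gives
`σ(B(λ)) ≥ 2 ∑ λⱼ^{-1/2} / (n+2)`, and the tangent-line bound `x^{-1/2} ≥ (3 - x)/2` together
with `∑ λⱼ ≤ n+1` gives `∑ λⱼ^{-1/2} ≥ n+1`; finally `2(n+1)/(n+2) > 2√(1 - 4 ln 2/(n+1))`.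

Upper bound: `σ̄ ≤ σ(B(λ))` for an explicit feasible `λ` whose Perron root is known exactly.
Given `c` with `c₀ = 1`, `c_{n+1} = -1` and `|cₖ| < 1` otherwise, the off-diagonal entries
`bⱼ = s √(1 + cⱼ) √(1 - c_{j+1})` and the positive vector `vₖ = ∏_{i<k} √(1 + cᵢ) / √(1 - c_{i+1})`
satisfy `bⱼ v_{j+1} = s (1 + cⱼ) vⱼ` and `bⱼ vⱼ = s (1 - c_{j+1}) v_{j+1}`, so row `i` of `B v` is
`s (1 + cᵢ) vᵢ + s (1 - cᵢ) vᵢ = 2 s vᵢ`; a positive eigenvector belongs to the Perron root.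
Normalising `∑ λⱼ = n+1` forces `s² = ∑ⱼ 1/((1 + cⱼ)(1 - c_{j+1})) / (n+1)`, and
`c = (1, 1/4, 0, …, 0, -1)` makes that sum `n - 1/30 < n`.
-/

open Real

namespace Matrix

variable {ι : Type*} [Fintype ι]

theorem setOf_mulVec_eq_smul_eq_spectrum [DecidableEq ι] {K : Type*} [Field K]
    (A : Matrix ι ι K) :
    {μ : K | ∃ v : ι → K, v ≠ 0 ∧ A *ᵥ v = μ • v} = spectrum K A := by
  ext μ
  rw [Set.mem_ofPred_eq, ← spectrum_toLin', ← Module.End.hasEigenvalue_iff_mem_spectrum,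
    Module.End.HasEigenvalue, Module.End.HasUnifEigenvalue, Submodule.ne_bot_iff]
  simp [Module.End.mem_genEigenspace_one, and_comm]

theorem IsHermitian.dotProduct_mulVec_le [DecidableEq ι] {A : Matrix ι ι ℝ} (hA : A.IsHermitian)
    {c : ℝ} (hc : ∀ μ ∈ spectrum ℝ A, μ ≤ c) (x : ι → ℝ) : x ⬝ᵥ A *ᵥ x ≤ c * (x ⬝ᵥ x) := by
  have hpsd : (algebraMap ℝ _ c - A).PosSemidef := by
    refine posSemidef_iff_isHermitian_and_spectrum_nonneg.2 ⟨?_, ?_⟩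
    · exact (isHermitian_diagonal _).sub hA
    · rw [← spectrum.singleton_sub_eq]
      rintro _ ⟨_, rfl, μ, hμ, rfl⟩
      simpa using hc μ hμ
  have := hpsd.dotProduct_mulVec_nonneg x
  rw [Algebra.algebraMap_eq_smul_one, sub_mulVec, smul_mulVec, one_mulVec, dotProduct_sub,
    dotProduct_smul, star_trivial, smul_eq_mul] at this
  linarith

theorem le_of_vecMul_eq_smul_of_mulVec_eq_smul {A : Matrix ι ι ℝ} (hA : ∀ i j, 0 ≤ A i j)
    {v : ι → ℝ} (hv : ∀ i, 0 < v i) {σ : ℝ} (hσ : v ᵥ* A = σ • v)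
    {w : ι → ℝ} (hw : w ≠ 0) {μ : ℝ} (hμ : A *ᵥ w = μ • w) : μ ≤ σ := by
  set u : ι → ℝ := fun i => |w i|
  have hu : 0 < v ⬝ᵥ u := by
    obtain ⟨k, hk⟩ := Function.ne_iff.1 hw
    exact Finset.sum_pos' (fun i _ => mul_nonneg (hv i).le (abs_nonneg _))
      ⟨k, Finset.mem_univ k, mul_pos (hv k) (abs_pos.2 hk)⟩
  have habs : ∀ i, |μ| * u i ≤ (A *ᵥ u) i := fun i => by
    calc |μ| * u i = |(A *ᵥ w) i| := by simp [hμ, u, abs_mul]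
      _ ≤ ∑ j, |A i j * w j| := Finset.abs_sum_le_sum_abs _ _
      _ = (A *ᵥ u) i := by simp [mulVec, dotProduct, u, abs_mul, abs_of_nonneg (hA _ _)]
  have key : |μ| * (v ⬝ᵥ u) ≤ σ * (v ⬝ᵥ u) :=
    calc |μ| * (v ⬝ᵥ u) = v ⬝ᵥ (|μ| • u) := by rw [dotProduct_smul, smul_eq_mul]
      _ ≤ v ⬝ᵥ (A *ᵥ u) := Finset.sum_le_sum fun i _ =>
          mul_le_mul_of_nonneg_left (habs i) (hv i).le
      _ = σ * (v ⬝ᵥ u) := by rw [dotProduct_mulVec, hσ, smul_dotProduct, smul_eq_mul]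
  exact (le_abs_self μ).trans (le_of_mul_le_mul_right key hu)

end Matrix

open Matrix

section Bmat

variable {n : ℕ} {l : Fin (n+1) → ℝ}

theorem Bmat_transpose : (Bmat n l)ᵀ = Bmat n l := by
  ext i j
  simp only [transpose_apply, Bmat, of_apply]
  split_ifs <;> first | rfl | omega

theorem isHermitian_Bmat : (Bmat n l).IsHermitian := by
  rw [IsHermitian, conjTranspose_eq_transpose_of_trivial, Bmat_transpose]

theorem Bmat_nonneg (hl : ∀ j, 0 < l j) (i j : Fin (n+2)) : 0 ≤ Bmat n l i j := by
  simp only [Bmat, of_apply]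
  split_ifs <;> first | exact Real.rpow_nonneg (hl _).le _ | exact le_rfl

theorem sigmaB_eq_sSup_spectrum : sigmaB n l = sSup (spectrum ℝ (Bmat n l)) := by
  rw [sigmaB, setOf_mulVec_eq_smul_eq_spectrum]

theorem sigmaB_eq_of_mulVec_eq_smul (hl : ∀ j, 0 < l j)
    {v : Fin (n+2) → ℝ} (hv : ∀ i, 0 < v i) {σ : ℝ} (hσ : Bmat n l *ᵥ v = σ • v) :
    sigmaB n l = σ := by
  have hv0 : v ≠ 0 := fun h => (hv 0).ne' (congrFun h 0)
  have hvecMul : v ᵥ* Bmat n l = σ • v := by rw [← mulVec_transpose, Bmat_transpose, hσ]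
  apply le_antisymm
  · exact csSup_le ⟨σ, v, hv0, hσ⟩ fun μ ⟨w, hw, hμ⟩ =>
      le_of_vecMul_eq_smul_of_mulVec_eq_smul (Bmat_nonneg hl) hv hvecMul hw hμ
  · rw [sigmaB_eq_sSup_spectrum]
    exact le_csSup finite_real_spectrum.bddAbove
      (setOf_mulVec_eq_smul_eq_spectrum (Bmat n l) ▸ ⟨v, hv0, hσ⟩)

variable {a : ℕ → ℝ}

theorem Bmat_apply_of_eq (ha : ∀ j : Fin (n+1), l j ^ (-(1/2) : ℝ) = a j) (i j : Fin (n+2)) :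
    Bmat n l i j = (if (i : ℕ) + 1 = j then a i else 0) + (if (j : ℕ) + 1 = i then a j else 0) := by
  simp only [Bmat, of_apply, ha]
  split_ifs <;> first | omega | simp

theorem Bmat_mulVec_apply_of_eq (ha : ∀ j : Fin (n+1), l j ^ (-(1/2) : ℝ) = a j) (v : ℕ → ℝ)
    (i : Fin (n+2)) :
    (Bmat n l *ᵥ fun k => v k) i =
      (if (i : ℕ) < n + 1 then a i * v (i + 1) else 0) +
      (if 0 < (i : ℕ) then a (i - 1) * v (i - 1) else 0) := by
  simp only [mulVec, dotProduct, Bmat_apply_of_eq ha, add_mul, ite_mul, zero_mul,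
    Finset.sum_add_distrib]
  rw [Fin.sum_univ_eq_sum_range (fun j => if (i : ℕ) + 1 = j then a i * v j else 0),
    Fin.sum_univ_eq_sum_range (fun j => if j + 1 = (i : ℕ) then a j * v j else 0),
    Finset.sum_ite_eq]
  congr 1
  · simp
  · obtain ⟨i, hi⟩ := i
    cases i with
    | zero => simp
    | succ k => simp [Finset.sum_ite_eq', show k < n + 2 by omega]

end Bmat

section LowerBound

variable {n : ℕ} {l : Fin (n+1) → ℝ}

theorem three_sub_div_two_le_rpow_neg_half {x : ℝ} (hx : 0 < x) :
    (3 - x) / 2 ≤ x ^ (-(1/2) : ℝ) := by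
  obtain ⟨s, hs, rfl⟩ : ∃ s, 0 < s ∧ x = s ^ 2 :=
    ⟨√x, Real.sqrt_pos.2 hx, (Real.sq_sqrt hx.le).symm⟩
  rw [Real.rpow_neg hx.le, ← Real.sqrt_eq_rpow, Real.sqrt_sq hs.le, inv_eq_one_div,
    le_div_iff₀ hs]
  nlinarith [mul_nonneg (sq_nonneg (s - 1)) (by positivity : (0:ℝ) ≤ s + 2)]

theorem le_sum_rpow_neg_half (hl : Feasible n l) : (n : ℝ) + 1 ≤ ∑ j, l j ^ (-(1/2) : ℝ) := by
  obtain ⟨hpos, hsum⟩ := hl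
  rw [div_le_one (by positivity)] at hsum
  calc (n : ℝ) + 1 ≤ ∑ j, (3 - l j) / 2 := by
        rw [← Finset.sum_div, Finset.sum_sub_distrib]
        simp only [Finset.sum_const, Finset.card_univ, Fintype.card_fin, nsmul_eq_mul,
          Nat.cast_add, Nat.cast_one]
        linarith
    _ ≤ _ := Finset.sum_le_sum fun j _ => three_sub_div_two_le_rpow_neg_half (hpos j)

theorem one_dotProduct_Bmat_mulVec_one :
    1 ⬝ᵥ Bmat n l *ᵥ 1 = 2 * ∑ j, l j ^ (-(1/2) : ℝ) := by
  set a : ℕ → ℝ := fun k => if h : k < n + 1 then l ⟨k, h⟩ ^ (-(1/2) : ℝ) else 0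
  have ha (j : Fin (n+1)) : l j ^ (-(1/2) : ℝ) = a j := by
    simp only [a, dif_pos j.isLt, Fin.eta]
  have h : ∀ i : Fin (n+2), (Bmat n l *ᵥ 1) i = _ := Bmat_mulVec_apply_of_eq ha (fun _ => 1)
  simp only [mul_one] at h
  rw [one_dotProduct]
  simp only [h, ha]
  rw [Fin.sum_univ_eq_sum_range (fun k => (if k < n + 1 then a k else 0) +
      (if 0 < k then a (k - 1) else 0)), Fin.sum_univ_eq_sum_range a, Finset.sum_add_distrib,
    Finset.sum_range_succ (fun k => if k < n + 1 then a k else 0),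
    Finset.sum_range_succ' (fun k => if 0 < k then a (k - 1) else 0),
    Finset.sum_congr rfl fun k hk => if_pos (Finset.mem_range.1 hk)]
  simp [two_mul]

theorem two_mul_div_le_sigmaB (hl : Feasible n l) :
    2 * ((n : ℝ) + 1) / ((n : ℝ) + 2) ≤ sigmaB n l := by
  have hray := isHermitian_Bmat.dotProduct_mulVec_le (c := sigmaB n l)
    (fun μ hμ => sigmaB_eq_sSup_spectrum ▸ le_csSup finite_real_spectrum.bddAbove hμ) 1
  rw [one_dotProduct_Bmat_mulVec_one, dotProduct_one] at hray
  simp only [Pi.one_apply, Finset.sum_const, Finset.card_univ, Fintype.card_fin, nsmul_eq_mul,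
    Nat.cast_add, Nat.cast_ofNat, mul_one] at hray
  rw [div_le_iff₀ (by positivity)]
  nlinarith [le_sum_rpow_neg_half hl]

theorem two_mul_sqrt_lt_two_mul_div (n : ℕ) :
    2 * √(1 - 4 * Real.log 2 / ((n : ℝ) + 1)) < 2 * ((n : ℝ) + 1) / ((n : ℝ) + 2) := by
  have hN : (0 : ℝ) < (n : ℝ) + 1 := by positivity
  have hlog : 2 / ((n : ℝ) + 1) < 4 * Real.log 2 / ((n : ℝ) + 1) := by
    gcongr
    linarith [Real.log_two_gt_d9]
  have hsq : 1 - 2 / ((n : ℝ) + 1) ≤ (((n : ℝ) + 1) / ((n : ℝ) + 2)) ^ 2 := by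
    rw [div_pow, one_sub_div hN.ne', div_le_div_iff₀ hN (by positivity)]
    nlinarith
  rw [mul_div_assoc (2 : ℝ)]
  have hpos : (0 : ℝ) < ((n : ℝ) + 1) / ((n : ℝ) + 2) := by positivity
  exact mul_lt_mul_of_pos_left ((Real.sqrt_lt' hpos).2 (by linarith)) two_pos

end LowerBound

section UpperBound

variable (c : ℕ → ℝ) (s : ℝ)

noncomputable def offDiagOf (j : ℕ) : ℝ := s * √(1 + c j) * √(1 - c (j + 1))

noncomputable def lambdaOf (j : ℕ) : ℝ := (s ^ 2 * ((1 + c j) * (1 - c (j + 1))))⁻¹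

noncomputable def perronVecOf (k : ℕ) : ℝ := ∏ i ∈ Finset.range k, √(1 + c i) / √(1 - c (i + 1))

variable {c s} {j : ℕ}

theorem perronVecOf_succ :
    perronVecOf c (j + 1) = perronVecOf c j * (√(1 + c j) / √(1 - c (j + 1))) :=
  Finset.prod_range_succ _ _

theorem lambdaOf_rpow_neg_half (hs : 0 ≤ s) (h1 : 0 < 1 + c j) (h2 : 0 < 1 - c (j + 1)) :
    lambdaOf c s j ^ (-(1/2) : ℝ) = offDiagOf c s j := by
  rw [lambdaOf, Real.inv_rpow (by positivity), Real.rpow_neg (by positivity), inv_inv,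
    ← Real.sqrt_eq_rpow, Real.sqrt_mul (by positivity), Real.sqrt_mul h1.le, Real.sqrt_sq hs,
    offDiagOf, mul_assoc]

theorem offDiagOf_mul_perronVecOf_succ (h1 : 0 < 1 + c j) (h2 : 0 < 1 - c (j + 1)) :
    offDiagOf c s j * perronVecOf c (j + 1) = s * (1 + c j) * perronVecOf c j := by
  have : √(1 - c (j + 1)) ≠ 0 := (Real.sqrt_pos.2 h2).ne'
  rw [perronVecOf_succ, offDiagOf]
  field_simp
  rw [Real.sq_sqrt h1.le]

theorem offDiagOf_mul_perronVecOf (h1 : 0 < 1 + c j) (h2 : 0 < 1 - c (j + 1)) :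
    offDiagOf c s j * perronVecOf c j = s * (1 - c (j + 1)) * perronVecOf c (j + 1) := by
  have : √(1 - c (j + 1)) ≠ 0 := (Real.sqrt_pos.2 h2).ne'
  rw [perronVecOf_succ, offDiagOf]
  field_simp
  rw [Real.sq_sqrt h2.le]

theorem perronVecOf_pos {k : ℕ} (hc : ∀ i < k, 0 < 1 + c i ∧ 0 < 1 - c (i + 1)) :
    0 < perronVecOf c k :=
  Finset.prod_pos fun i hi =>
    div_pos (Real.sqrt_pos.2 (hc i (Finset.mem_range.1 hi)).1)
      (Real.sqrt_pos.2 (hc i (Finset.mem_range.1 hi)).2)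

variable {n : ℕ} (h0 : c 0 = 1) (hlast : c (n + 1) = -1)
  (hc : ∀ j ≤ n, 0 < 1 + c j ∧ 0 < 1 - c (j + 1))
include h0 hlast hc

theorem Bmat_lambdaOf_mulVec_perronVecOf (hs : 0 ≤ s) :
    (Bmat n fun j => lambdaOf c s j) *ᵥ (fun k : Fin (n+2) => perronVecOf c k) =
      (2 * s) • fun k : Fin (n+2) => perronVecOf c k := by
  have ha (j : Fin (n+1)) : lambdaOf c s j ^ (-(1/2) : ℝ) = offDiagOf c s j :=
    lambdaOf_rpow_neg_half hs (hc j (by omega)).1 (hc j (by omega)).2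
  have hright (i : ℕ) (hi : i ≤ n + 1) :
      (if i < n + 1 then offDiagOf c s i * perronVecOf c (i + 1) else 0) =
        s * (1 + c i) * perronVecOf c i := by
    split_ifs with h
    · exact offDiagOf_mul_perronVecOf_succ (hc i (by omega)).1 (hc i (by omega)).2
    · simp [show i = n + 1 by omega, hlast]
  have hleft (i : ℕ) (hi : i ≤ n + 1) :
      (if 0 < i then offDiagOf c s (i - 1) * perronVecOf c (i - 1) else 0) =
        s * (1 - c i) * perronVecOf c i := by
    split_ifs with h
    · obtain ⟨k, rfl⟩ : ∃ k, i = k + 1 := ⟨i - 1, by omega⟩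
      exact offDiagOf_mul_perronVecOf (hc k (by omega)).1 (hc k (by omega)).2
    · simp [show i = 0 by omega, h0]
  ext i
  rw [Bmat_mulVec_apply_of_eq ha, hright i (by omega), hleft i (by omega), Pi.smul_apply,
    smul_eq_mul]
  ring

theorem exists_feasible_sigmaB_eq :
    ∃ l, Feasible n l ∧ sigmaB n l =
      2 * √((∑ j ∈ Finset.range (n + 1), ((1 + c j) * (1 - c (j + 1)))⁻¹) / ((n : ℝ) + 1)) := by
  set F := ∑ j ∈ Finset.range (n + 1), ((1 + c j) * (1 - c (j + 1)))⁻¹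
  have hd (j : ℕ) (hj : j ≤ n) : 0 < (1 + c j) * (1 - c (j + 1)) := mul_pos (hc j hj).1 (hc j hj).2
  have hF : 0 < F := Finset.sum_pos (fun j hj => inv_pos.2 (hd j (by simp at hj; omega)))
    Finset.nonempty_range_add_one
  have hN : (0 : ℝ) < (n : ℝ) + 1 := by positivity
  set s := √(F / ((n : ℝ) + 1))
  have hs : 0 < s := Real.sqrt_pos.2 (div_pos hF hN)
  refine ⟨fun j => lambdaOf c s j, ⟨fun j => ?_, ?_⟩, ?_⟩
  · exact inv_pos.2 (mul_pos (by positivity) (hd j (by omega)))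
  · rw [Fin.sum_univ_eq_sum_range (lambdaOf c s)]
    simp only [lambdaOf, mul_inv (s ^ 2)]
    rw [← Finset.mul_sum,
      Real.sq_sqrt (div_pos hF hN).le, inv_div, div_mul_cancel₀ _ hF.ne', div_self hN.ne']
  · exact sigmaB_eq_of_mulVec_eq_smul
      (fun j => inv_pos.2 (mul_pos (by positivity) (hd j (by omega))))
      (fun i => perronVecOf_pos fun k hk => hc k (by omega))
      (Bmat_lambdaOf_mulVec_perronVecOf h0 hlast hc hs.le)

end UpperBound

-- With `c₁ = 0` too, the sum in `exists_feasible_sigmaB_eq` would be exactly `n`.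
noncomputable def testSplitting (n k : ℕ) : ℝ :=
  if k = 0 then 1 else if k = 1 then 1 / 4 else if k = n + 1 then -1 else 0

theorem sum_testSplitting_lt (m : ℕ) :
    ∑ j ∈ Finset.range (m + 3),
      ((1 + testSplitting (m + 2) j) * (1 - testSplitting (m + 2) (j + 1)))⁻¹ < m + 2 := by
  have hzero (j : ℕ) (hj : j < m + 1) : testSplitting (m + 2) (j + 1 + 1) = 0 := by
    simp only [testSplitting]
    rw [if_neg (by omega), if_neg (by omega), if_neg (by omega)]
  have hmid : ∑ j ∈ Finset.range m, ((1 + testSplitting (m + 2) (j + 1 + 1)) *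
      (1 - testSplitting (m + 2) (j + 1 + 1 + 1)))⁻¹ = m := by
    rw [Finset.sum_congr rfl fun j hj => show _ = (1 : ℝ) by
      rw [hzero j (by simp at hj; omega), hzero (j + 1) (by simp at hj; omega)]; norm_num]
    simp
  rw [Finset.sum_range_succ, Finset.sum_range_succ', Finset.sum_range_succ', hmid]
  norm_num [testSplitting, show m + 2 ≠ 1 by omega]
  linarith

theorem exists_feasible_sigmaB_lt {n : ℕ} (hn : 1 < n) :
    ∃ l, Feasible n l ∧ sigmaB n l < 2 * √(1 - 1 / ((n : ℝ) + 1)) := by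
  obtain ⟨m, rfl⟩ : ∃ m, n = m + 2 := ⟨n - 2, by omega⟩
  obtain ⟨l, hl, hσ⟩ := exists_feasible_sigmaB_eq (n := m + 2) (c := testSplitting (m + 2))
    (by simp [testSplitting]) (by simp [testSplitting]) fun j hj => by
      simp only [testSplitting]
      split_ifs <;> first | contradiction | omega | norm_num
  have hN : (0 : ℝ) < (m + 2 : ℕ) + 1 := by positivity
  refine ⟨l, hl, hσ ▸ mul_lt_mul_of_pos_left ?_ two_pos⟩
  have hpos : (0 : ℝ) < 1 - 1 / ((m + 2 : ℕ) + 1) := by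
    rw [sub_pos, div_lt_one hN]
    push_cast
    linarith
  rw [Real.sqrt_lt_sqrt_iff_of_pos hpos, one_sub_div hN.ne']
  gcongr
  push_cast
  linarith [sum_testSplitting_lt m]

/-- for `n > 1`, `2√(1 - 4ln2/(n+1)) < σ̄ < 2√(1 - 1/(n+1))`. -/
theorem stmt_14 (n : ℕ) (hn : 1 < n) (l : Fin (n+1) → ℝ)
    (hmin : IsMinimizer n l) :
    2 * Real.sqrt (1 - 4 * Real.log 2 / ((n : ℝ) + 1)) < sigmaB n l ∧
    sigmaB n l < 2 * Real.sqrt (1 - 1 / ((n : ℝ) + 1)) := by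
  obtain ⟨hfeas, hle⟩ := hmin
  obtain ⟨m, hm, hσm⟩ := exists_feasible_sigmaB_lt hn
  exact ⟨(two_mul_sqrt_lt_two_mul_div n).trans_le (two_mul_div_le_sigmaB hfeas),
    (hle m hm).trans_lt hσm⟩
end
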